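/- Let -1 < Δ < 1, s > 0, I_L > 0, and define π_F(I_F) = (1/(9 I_L^2) - s) I_F^2 + (2(1-Δ)/(9 I_L)) I_F + (1-Δ)^2/9 on [0, I_L]. Then π_F attains its maximum on [0, I_L] at I_F* = (1-Δ) I_L/(9 I_L^2 s - 1) if I_L > √((2-Δ)/(9s)), and at I_F* = I_L if 0 < I_L ≤ √((2-Δ)/(9s)). -/

import Mathlib

/-!
π_F is a quadratic in I_F with leading coefficient 1/(9 I_L²) - s. When I_L² > (2-Δ)/(9s) this
coefficient is negative, so π_F is a downward parabola maximised at its vertex, which is the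
stated I_F*. Otherwise the slope 2 a I_F + b of π_F is nonnegative at both ends of [0, I_L], hence
on the whole interval, so π_F is nondecreasing there and peaks at I_L.
-/

open Set

theorem isMaxOn_quadratic_vertex {a : ℝ} (b c : ℝ) (ha : a < 0) :
    IsMaxOn (fun x => a * x ^ 2 + b * x + c) univ (-b / (2 * a)) := by
  intro x _
  have ha0 : a ≠ 0 := ha.ne
  have hsquare : a * (-b / (2 * a)) ^ 2 + b * (-b / (2 * a)) + c - (a * x ^ 2 + b * x + c)
      = -a * (x + b / (2 * a)) ^ 2 := by
    field_simp
    ring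
  show a * x ^ 2 + b * x + c ≤ a * (-b / (2 * a)) ^ 2 + b * (-b / (2 * a)) + c
  linarith [mul_nonneg (neg_nonneg.mpr ha.le) (sq_nonneg (x + b / (2 * a)))]

theorem isMaxOn_quadratic_Icc_right {a b : ℝ} (c : ℝ) {p q : ℝ}
    (hp : 0 ≤ 2 * a * p + b) (hq : 0 ≤ 2 * a * q + b) :
    IsMaxOn (fun x => a * x ^ 2 + b * x + c) (Icc p q) q := by
  rintro x ⟨hpx, hxq⟩
  -- The chord slope `a (q + x) + b` lies between the derivatives at `p` and at `q`.
  have hslope : 0 ≤ a * (q + x) + b := by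
    rcases le_or_gt 0 a with ha | ha
    · nlinarith [mul_le_mul_of_nonneg_left hpx ha]
    · nlinarith [mul_le_mul_of_nonpos_left hxq ha.le]
  show a * x ^ 2 + b * x + c ≤ a * q ^ 2 + b * q + c
  nlinarith [mul_nonneg (sub_nonneg.mpr hxq) hslope]

theorem stmt7_general (Δ s IL : ℝ) (hΔ2 : Δ < 1) (hs : 0 < s) (hIL : 0 < IL)
    (πF : ℝ → ℝ)
    (hπ : ∀ x, πF x = (1 / (9 * IL ^ 2) - s) * x ^ 2
        + (2 * (1 - Δ) / (9 * IL)) * x + (1 - Δ) ^ 2 / 9) :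
    (IL > Real.sqrt ((2 - Δ) / (9 * s)) →
      IsMaxOn πF (Icc 0 IL) ((1 - Δ) * IL / (9 * IL ^ 2 * s - 1))) ∧
    (IL ≤ Real.sqrt ((2 - Δ) / (9 * s)) →
      IsMaxOn πF (Icc 0 IL) IL) := by
  obtain rfl : πF = _ := funext hπ
  have h9s : 0 < 9 * s := by positivity
  constructor
  · intro h
    have hlarge : 2 - Δ < 9 * s * IL ^ 2 := by
      rw [← div_lt_iff₀' h9s, ← Real.sqrt_lt' hIL]; exact h
    have hden : 0 < 9 * IL ^ 2 * s - 1 := by linarith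
    have ha : 1 / (9 * IL ^ 2) - s < 0 := by
      rw [sub_neg, div_lt_iff₀ (by positivity)]; linarith
    have hvertex : (1 - Δ) * IL / (9 * IL ^ 2 * s - 1)
        = -(2 * (1 - Δ) / (9 * IL)) / (2 * (1 / (9 * IL ^ 2) - s)) := by
      rw [div_eq_div_iff hden.ne' (by linarith)]
      field_simp
      ring
    rw [hvertex]
    exact (isMaxOn_quadratic_vertex _ _ ha).on_subset (subset_univ _)
  · intro h
    have hsmall : 9 * s * IL ^ 2 ≤ 2 - Δ := by
      rw [← le_div_iff₀' h9s, ← Real.le_sqrt' hIL]; exact h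
    apply isMaxOn_quadratic_Icc_right
    · simp only [mul_zero, zero_add]
      exact div_nonneg (by linarith) (by positivity)
    · have hslope : 2 * (1 / (9 * IL ^ 2) - s) * IL + 2 * (1 - Δ) / (9 * IL)
          = 2 * (2 - Δ - 9 * s * IL ^ 2) / (9 * IL) := by
        field_simp
        ring
      rw [hslope]
      exact div_nonneg (by linarith) (by positivity)

theorem stmt7 (Δ s IL : ℝ) (hΔ1 : -1 < Δ) (hΔ2 : Δ < 1) (hs : 0 < s) (hIL : 0 < IL)
    (πF : ℝ → ℝ)
    (hπ : ∀ x, πF x = (1 / (9 * IL ^ 2) - s) * x ^ 2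
        + (2 * (1 - Δ) / (9 * IL)) * x + (1 - Δ) ^ 2 / 9) :
    (IL > Real.sqrt ((2 - Δ) / (9 * s)) →
      IsMaxOn πF (Icc 0 IL) ((1 - Δ) * IL / (9 * IL ^ 2 * s - 1))) ∧
    (IL ≤ Real.sqrt ((2 - Δ) / (9 * s)) →
      IsMaxOn πF (Icc 0 IL) IL) :=
  stmt7_general Δ s IL hΔ2 hs hIL πF hπ
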